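/- arXiv:1403.6050 — 4 statements merged into one kernel-verified Lean document; each statement's English description precedes it below -/
import Mathlib

section
/- Let Λ₀ ⊆ ℝ^d be an f-invariant set (f(Λ₀) = Λ₀) with compact closure, equipped with maps E, F assigning to each x ∈ Λ₀ linear subspaces E(x), F(x) ⊆ ℝ^d such that ℝ^d = E(x) ⊕ F(x), dim E(x) = i for all x ∈ Λ₀, Df_x(E(x)) = E(f(x)) and Df_x(F(x)) = F(f(x)), and such that the domination inequality holds with constants C > 0, λ ∈ (0,1): for every x ∈ Λ₀, n ≥ 0 and nonzero u ∈ E(x), v ∈ F(x), ‖D(f^n)_x u‖/‖u‖ ≤ C·λ^n·‖D(f^n)_x v‖/‖v‖ (continuity of E, F is NOT assumed). Then the closure of Λ₀ is f-invariant and there exist maps Ē, F̄ on the closure of Λ₀, agreeing with E, F on Λ₀, which form a dominated splitting on the closure with the same constants C, λ and constant index i; in particular Ē and F̄ vary continuously. -/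
/-!
At a point `x` of the closure, every limit of the splittings `(E z, F z)` along `z → x` in `Λ₀`
(taken in the topology of orthogonal projections, which range over a compact set) is again a
splitting of dimensions `(i, d - i)`, dominated forward along `D(fⁿ)ₓ` and backward along
`D(f⁻ⁿ)ₓ` with the same constants: these are closed conditions. Domination makes such a splitting
unique, since a vector outside `E` eventually grows faster than every vector of `E`, so two
candidates for `E` of the same dimension cannot differ; the same holds for `F` under backward
iteration. Hence the closure of the graph of `x ↦ (E x, F x)` is the graph of a function on
`closure Λ₀`, continuous because its values lie in a compact set, and invariance under `Df`
passes from `Λ₀` to its closure by continuity.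
-/

open Set

noncomputable section

abbrev Euc (d : ℕ) := EuclideanSpace ℝ (Fin d)

def IsC1Diffeo {d : ℕ} (f : Euc d → Euc d) : Prop :=
  Function.Bijective f ∧ ContDiff ℝ 1 f ∧
    ∃ g : Euc d → Euc d, ContDiff ℝ 1 g ∧ Function.LeftInverse g f ∧ Function.RightInverse g f

def projSub {d : ℕ} (V : Submodule ℝ (Euc d)) : Euc d →L[ℝ] Euc d :=
  V.subtypeL.comp (V.orthogonalProjectionOnto)

def DomIneq {d : ℕ} (f : Euc d → Euc d) (Λ : Set (Euc d))
    (E F : Euc d → Submodule ℝ (Euc d)) (C lam : ℝ) : Prop :=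
  ∀ x ∈ Λ, ∀ n : ℕ, ∀ u ∈ E x, u ≠ 0 → ∀ v ∈ F x, v ≠ 0 →
    ‖fderiv ℝ (f^[n]) x u‖ / ‖u‖ ≤ C * lam ^ n * (‖fderiv ℝ (f^[n]) x v‖ / ‖v‖)

def IsDomSplitting {d : ℕ} (f : Euc d → Euc d) (Λ : Set (Euc d))
    (E F : Euc d → Submodule ℝ (Euc d)) (C lam : ℝ) : Prop :=
  (∀ x ∈ Λ, IsCompl (E x) (F x)) ∧
  (∀ x ∈ Λ, (E x).map (fderiv ℝ f x : Euc d →ₗ[ℝ] Euc d) = E (f x)) ∧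
  (∀ x ∈ Λ, (F x).map (fderiv ℝ f x : Euc d →ₗ[ℝ] Euc d) = F (f x)) ∧
  ContinuousOn (fun x => projSub (E x)) Λ ∧
  ContinuousOn (fun x => projSub (F x)) Λ ∧
  DomIneq f Λ E F C lam

open Filter Topology Asymptotics Module Function

section Domination

variable {V : Type*} [NormedAddCommGroup V] [NormedSpace ℝ V]

/-- The domination inequality in product form, which needs no nonvanishing hypotheses. -/
def DominatedWith (A : ℕ → V →L[ℝ] V) (C lam : ℝ) (U W : Submodule ℝ V) : Prop :=
  ∀ n, ∀ u ∈ U, ∀ w ∈ W, ‖A n u‖ * ‖w‖ ≤ C * lam ^ n * (‖A n w‖ * ‖u‖)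

def EventuallyDominated (A : ℕ → V →L[ℝ] V) (U W : Submodule ℝ V) : Prop :=
  ∀ u ∈ U, ∀ w ∈ W, w ≠ 0 → (fun n => A n u) =o[atTop] (fun n => A n w)

variable {A B : ℕ → V →L[ℝ] V} {C lam : ℝ} {i j : ℕ} {U W U' W' : Submodule ℝ V}

theorem DominatedWith.eventuallyDominated (h : DominatedWith A C lam U W)
    (hlam0 : 0 ≤ lam) (hlam1 : lam < 1) : EventuallyDominated A U W := by
  intro u hu w hw hw0
  have hw0 : 0 < ‖w‖ := norm_pos_iff.mpr hw0
  have hc : Tendsto (fun n => C * ‖u‖ / ‖w‖ * lam ^ n) atTop (𝓝 0) := by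
    simpa using
      (tendsto_pow_atTop_nhds_zero_of_lt_one hlam0 hlam1).const_mul (C * ‖u‖ / ‖w‖)
  refine isLittleO_iff.mpr fun ε hε => ?_
  filter_upwards [hc.eventually (ge_mem_nhds hε)] with n hn
  calc ‖A n u‖ ≤ C * ‖u‖ / ‖w‖ * lam ^ n * ‖A n w‖ := by
        rw [div_mul_eq_mul_div, div_mul_eq_mul_div, le_div_iff₀ hw0]
        linarith [h n u hu w hw]
    _ ≤ ε * ‖A n w‖ := by gcongr

theorem EventuallyDominated.isLittleO_of_notMem (h : EventuallyDominated A U W)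
    (hUW : Codisjoint U W) {u v : V} (hu : u ∈ U) (hv : v ∉ U) :
    (fun n => A n u) =o[atTop] (fun n => A n v) := by
  obtain ⟨a, ha, b, hb, rfl⟩ :=
    Submodule.mem_sup.mp (hUW.eq_top ▸ Submodule.mem_top : v ∈ U ⊔ W)
  have hb0 : b ≠ 0 := by rintro rfl; exact hv (by simpa using ha)
  have hequiv : (fun n => A n (a + b)) ~[atTop] (fun n => A n b) := by
    simpa [IsEquivalent, Pi.sub_def] using h a ha b hb hb0
  exact (h u hu b hb hb0).trans_isBigO hequiv.symm.isBigO

theorem EventuallyDominated.disjoint (h : EventuallyDominated A U W)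
    (hA : ∀ n, Injective (A n)) : Disjoint U W := by
  refine Submodule.disjoint_def.mpr fun w hwU hwW => by_contra fun hw => ?_
  exact isLittleO_irrefl (.of_forall fun n => (map_ne_zero_iff _ (hA n)).mpr hw) (h w hwU w hwW hw)

theorem EventuallyDominated.eq [FiniteDimensional ℝ V] (hA : ∀ n, Injective (A n))
    (h : EventuallyDominated A U W) (h' : EventuallyDominated A U' W')
    (hUW : Codisjoint U W) (hUW' : Codisjoint U' W') (hrank : finrank ℝ U = finrank ℝ U') :
    U = U' := by
  by_contra hne
  obtain ⟨u, hu, hu'⟩ := SetLike.not_le_iff_exists.mp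
    fun hle => hne (Submodule.eq_of_le_of_finrank_eq hle hrank)
  obtain ⟨v, hv', hv⟩ := SetLike.not_le_iff_exists.mp
    fun hle => hne (Submodule.eq_of_le_of_finrank_eq hle hrank.symm).symm
  have hu0 : u ≠ 0 := by rintro rfl; exact hu' (zero_mem _)
  exact isLittleO_irrefl (.of_forall fun n => (map_ne_zero_iff _ (hA n)).mpr hu0)
    ((h.isLittleO_of_notMem hUW hu hv).trans (h'.isLittleO_of_notMem hUW' hv' hu'))

structure IsDominatedDecomposition (A B : ℕ → V →L[ℝ] V) (C lam : ℝ) (i j : ℕ)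
    (U W : Submodule ℝ V) : Prop where
  finrank_left : finrank ℝ U = i
  finrank_right : finrank ℝ W = j
  forward : DominatedWith A C lam U W
  backward : DominatedWith B C lam W U

theorem IsDominatedDecomposition.isCompl [FiniteDimensional ℝ V]
    (h : IsDominatedDecomposition A B C lam i j U W)
    (hA : ∀ n, Injective (A n)) (hlam0 : 0 ≤ lam) (hlam1 : lam < 1)
    (hij : finrank ℝ V ≤ i + j) : IsCompl U W :=
  (Submodule.isCompl_iff_disjoint U W (by rw [h.finrank_left, h.finrank_right]; exact hij)).mpr
    ((h.forward.eventuallyDominated hlam0 hlam1).disjoint hA)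

theorem IsDominatedDecomposition.eq [FiniteDimensional ℝ V]
    (h : IsDominatedDecomposition A B C lam i j U W)
    (h' : IsDominatedDecomposition A B C lam i j U' W')
    (hA : ∀ n, Injective (A n)) (hB : ∀ n, Injective (B n))
    (hlam0 : 0 ≤ lam) (hlam1 : lam < 1) (hij : finrank ℝ V ≤ i + j) : U = U' ∧ W = W' := by
  have hc := h.isCompl hA hlam0 hlam1 hij
  have hc' := h'.isCompl hA hlam0 hlam1 hij
  exact ⟨(h.forward.eventuallyDominated hlam0 hlam1).eq hA
      (h'.forward.eventuallyDominated hlam0 hlam1) hc.codisjoint hc'.codisjoint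
      (h.finrank_left.trans h'.finrank_left.symm),
    (h.backward.eventuallyDominated hlam0 hlam1).eq hB
      (h'.backward.eventuallyDominated hlam0 hlam1) hc.symm.codisjoint hc'.symm.codisjoint
      (h.finrank_right.trans h'.finrank_right.symm)⟩

end Domination

section StarProjection

variable {V : Type*} [NormedAddCommGroup V] [InnerProductSpace ℝ V] [FiniteDimensional ℝ V]
  {A : ℕ → V →L[ℝ] V} {C lam : ℝ} {i j : ℕ} {U W : Submodule ℝ V}

theorem trace_starProjection (K : Submodule ℝ V) :
    LinearMap.trace ℝ V K.starProjection = finrank ℝ K :=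
  LinearMap.IsProj.trace ⟨K.starProjection_apply_mem, fun _ => K.starProjection_eq_self_iff.mpr⟩

theorem isCompact_setOf_isStarProjection : IsCompact {P : V →L[ℝ] V | IsStarProjection P} := by
  refine Metric.isCompact_of_isClosed_isBounded ?_ ?_
  · simp only [isStarProjection_iff', ofPred_and]
    exact (isClosed_eq (continuous_id.mul continuous_id) continuous_id).inter
      (isClosed_eq continuous_star continuous_id)
  · refine (Metric.isBounded_closedBall (x := 0) (r := 1)).subset fun P hP => ?_
    obtain ⟨K, _, rfl⟩ := isStarProjection_iff_eq_starProjection.mp hP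
    simpa using K.starProjection_norm_le

theorem dominatedWith_iff_forall_starProjection :
    DominatedWith A C lam U W ↔
      ∀ n u w, ‖A n (U.starProjection u)‖ * ‖W.starProjection w‖ ≤
      C * lam ^ n * (‖A n (W.starProjection w)‖ * ‖U.starProjection u‖) := by
  refine ⟨fun h n u w => h n _ (U.starProjection_apply_mem u) _ (W.starProjection_apply_mem w),
    fun h n u hu w hw => ?_⟩
  simpa [U.starProjection_eq_self_iff.mpr hu, W.starProjection_eq_self_iff.mpr hw] using h n u w

variable {X : Type*}

def dominatedDecompositions (A B : ℕ → X → V →L[ℝ] V) (C lam : ℝ) (i j : ℕ) :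
    Set (X × (V →L[ℝ] V) × (V →L[ℝ] V)) :=
  {p | ∃ U W : Submodule ℝ V, p.2 = (U.starProjection, W.starProjection) ∧
    IsDominatedDecomposition (A · p.1) (B · p.1) C lam i j U W}

theorem mem_dominatedDecompositions_iff {A B : ℕ → X → V →L[ℝ] V}
    {p : X × (V →L[ℝ] V) × (V →L[ℝ] V)} :
    p ∈ dominatedDecompositions A B C lam i j ↔
      IsStarProjection p.2.1 ∧ IsStarProjection p.2.2 ∧
      LinearMap.trace ℝ V p.2.1 = i ∧ LinearMap.trace ℝ V p.2.2 = j ∧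
      (∀ n u w, ‖A n p.1 (p.2.1 u)‖ * ‖p.2.2 w‖ ≤
        C * lam ^ n * (‖A n p.1 (p.2.2 w)‖ * ‖p.2.1 u‖)) ∧
      (∀ n w u, ‖B n p.1 (p.2.2 w)‖ * ‖p.2.1 u‖ ≤
        C * lam ^ n * (‖B n p.1 (p.2.1 u)‖ * ‖p.2.2 w‖)) := by
  obtain ⟨x, P, Q⟩ := p
  constructor
  · rintro ⟨U, W, he, h⟩
    obtain ⟨rfl, rfl⟩ := Prod.mk.inj he
    exact ⟨isStarProjection_starProjection, isStarProjection_starProjection,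
      by rw [trace_starProjection, h.finrank_left], by rw [trace_starProjection, h.finrank_right],
      dominatedWith_iff_forall_starProjection.mp h.forward,
      dominatedWith_iff_forall_starProjection.mp h.backward⟩
  · rintro ⟨hP, hQ, htP, htQ, hf, hb⟩
    obtain ⟨U, _, rfl⟩ := isStarProjection_iff_eq_starProjection.mp hP
    obtain ⟨W, _, rfl⟩ := isStarProjection_iff_eq_starProjection.mp hQ
    rw [trace_starProjection, Nat.cast_inj] at htP htQ
    exact ⟨U, W, rfl, htP, htQ, dominatedWith_iff_forall_starProjection.mpr hf,
      dominatedWith_iff_forall_starProjection.mpr hb⟩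

theorem isClosed_dominatedDecompositions [TopologicalSpace X] {A B : ℕ → X → V →L[ℝ] V}
    (hA : ∀ n, Continuous (A n)) (hB : ∀ n, Continuous (B n)) :
    IsClosed (dominatedDecompositions A B C lam i j) := by
  have htrace : Continuous fun P : V →L[ℝ] V => LinearMap.trace ℝ V P :=
    ((LinearMap.trace ℝ V).comp (ContinuousLinearMap.coeLM ℝ)).continuous_of_finiteDimensional
  have hproj := isCompact_setOf_isStarProjection (V := V) |>.isClosed
  rw [← ofPred_mem_eq (s := dominatedDecompositions A B C lam i j)]
  simp only [mem_dominatedDecompositions_iff, ofPred_and, ofPred_forall]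
  refine (hproj.preimage (by fun_prop)).inter <| (hproj.preimage (by fun_prop)).inter <|
    (isClosed_eq (htrace.comp (by fun_prop)) (by fun_prop)).inter <|
    (isClosed_eq (htrace.comp (by fun_prop)) (by fun_prop)).inter <|
    (isClosed_iInter fun n => isClosed_iInter fun u => isClosed_iInter fun w => ?_).inter
    (isClosed_iInter fun n => isClosed_iInter fun w => isClosed_iInter fun u => ?_)
  all_goals
    have := hA n
    have := hB n
    exact isClosed_le (by fun_prop) (by fun_prop)

end StarProjection

section ClosedGraph

variable {X Y : Type*} [TopologicalSpace X] [TopologicalSpace Y]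

theorem mem_closure_graph_of_mapClusterPt {s : Set X} {h : X → Y} {x : X} {y : Y}
    (hy : MapClusterPt y (𝓝[s] x) h) : (x, y) ∈ closure ((fun z => (z, h z)) '' s) := by
  refine mem_closure_iff_nhds.mpr fun t ht => ?_
  obtain ⟨a, ha, b, hb, hab⟩ := mem_nhds_prod_iff.mp ht
  obtain ⟨z, hzb, hza, hzs⟩ := ((mapClusterPt_iff_frequently.mp hy b hb).and_eventually
    (inter_mem (mem_nhdsWithin_of_mem_nhds ha) self_mem_nhdsWithin)).exists
  exact ⟨(z, h z), hab ⟨hza, hzb⟩, z, hzs, rfl⟩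

theorem IsCompact.continuousOn_of_closure_graph {s : Set X} {K : Set Y} {h : X → Y}
    (hK : IsCompact K) (hsK : MapsTo h s K)
    (hgraph : ∀ x ∈ s, ∀ y, (x, y) ∈ closure ((fun z => (z, h z)) '' s) → y = h x) :
    ContinuousOn h s := fun x hx =>
  hK.tendsto_nhds_of_unique_mapClusterPt (eventually_mem_nhdsWithin.mono hsK)
    fun y _ hy => hgraph x hx y (mem_closure_graph_of_mapClusterPt hy)

end ClosedGraph

section Extension

variable {X V : Type*} [TopologicalSpace X]
  [NormedAddCommGroup V] [InnerProductSpace ℝ V] [FiniteDimensional ℝ V]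
  {A B : ℕ → X → V →L[ℝ] V} {C lam : ℝ} {i j : ℕ} {Λ : Set X}
  {E F : X → Submodule ℝ V}

/-- The graph of `x ↦ (E x, F x)` over `Λ`, each subspace being represented by its orthogonal
projection so that the graph lives in a topological space. -/
def splittingGraph (Λ : Set X) (E F : X → Submodule ℝ V) :
    Set (X × (V →L[ℝ] V) × (V →L[ℝ] V)) :=
  (fun z => (z, (E z).starProjection, (F z).starProjection)) '' Λ

theorem exists_mem_closure_splittingGraph {x : X} (hx : x ∈ closure Λ) :
    ∃ U W : Submodule ℝ V,
      (x, U.starProjection, W.starProjection) ∈ closure (splittingGraph Λ E F) := by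
  have := mem_closure_iff_nhdsWithin_neBot.mp hx
  have hK := isCompact_setOf_isStarProjection (V := V)
  obtain ⟨⟨P, Q⟩, ⟨hP, hQ⟩, hc⟩ := (hK.prod hK).exists_mapClusterPt (f := 𝓝[Λ] x)
    (u := fun z => ((E z).starProjection, (F z).starProjection))
    (tendsto_principal.mpr (.of_forall fun z =>
      ⟨isStarProjection_starProjection, isStarProjection_starProjection⟩))
  obtain ⟨U, _, rfl⟩ := isStarProjection_iff_eq_starProjection.mp hP
  obtain ⟨W, _, rfl⟩ := isStarProjection_iff_eq_starProjection.mp hQ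
  exact ⟨U, W, mem_closure_graph_of_mapClusterPt hc⟩

theorem closure_splittingGraph_subset (hA : ∀ n, Continuous (A n))
    (hB : ∀ n, Continuous (B n))
    (hΛ : ∀ x ∈ Λ, IsDominatedDecomposition (A · x) (B · x) C lam i j (E x) (F x)) :
    closure (splittingGraph Λ E F) ⊆ dominatedDecompositions A B C lam i j :=
  closure_minimal (by rintro _ ⟨x, hx, rfl⟩; exact ⟨E x, F x, rfl, hΛ x hx⟩)
    (isClosed_dominatedDecompositions hA hB)

theorem exists_continuousOn_isDominatedDecomposition_closure
    (hA : ∀ n, Continuous (A n)) (hB : ∀ n, Continuous (B n))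
    (hAinj : ∀ n x, Injective (A n x)) (hBinj : ∀ n x, Injective (B n x))
    (hlam0 : 0 ≤ lam) (hlam1 : lam < 1) (hij : finrank ℝ V ≤ i + j)
    (hΛ : ∀ x ∈ Λ, IsDominatedDecomposition (A · x) (B · x) C lam i j (E x) (F x)) :
    ∃ Ebar Fbar : X → Submodule ℝ V, (∀ x ∈ Λ, Ebar x = E x ∧ Fbar x = F x) ∧
      (∀ x ∈ closure Λ,
        IsDominatedDecomposition (A · x) (B · x) C lam i j (Ebar x) (Fbar x)) ∧
      ContinuousOn (fun x => ((Ebar x).starProjection, (Fbar x).starProjection)) (closure Λ) := by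
  have hG := closure_splittingGraph_subset hA hB hΛ
  have huniq : ∀ {x} {U W U' W' : Submodule ℝ V},
      (x, U.starProjection, W.starProjection) ∈ closure (splittingGraph Λ E F) →
      (x, U'.starProjection, W'.starProjection) ∈ closure (splittingGraph Λ E F) →
      U = U' ∧ W = W' := by
    intro x U W U' W' h h'
    obtain ⟨U₀, W₀, he, hd⟩ := hG h
    obtain ⟨U₀', W₀', he', hd'⟩ := hG h'
    simp only [Prod.mk.injEq, Submodule.starProjection_inj] at he he'
    obtain ⟨rfl, rfl⟩ := he
    obtain ⟨rfl, rfl⟩ := he'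
    exact hd.eq hd' (hAinj · x) (hBinj · x) hlam0 hlam1 hij
  choose! Ebar Fbar hbar using
    fun x (hx : x ∈ closure Λ) => exists_mem_closure_splittingGraph (E := E) (F := F) hx
  refine ⟨Ebar, Fbar, fun x hx => huniq (hbar x (subset_closure hx))
    (subset_closure (mem_image_of_mem _ hx)), fun x hx => ?_, ?_⟩
  · obtain ⟨U, W, he, hd⟩ := hG (hbar x hx)
    simp only [Prod.mk.injEq, Submodule.starProjection_inj] at he
    rwa [he.1, he.2]
  · have hK := isCompact_setOf_isStarProjection (V := V)
    have hsub : closure (splittingGraph (closure Λ) Ebar Fbar) ⊆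
        closure (splittingGraph Λ E F) :=
      closure_minimal (by rintro _ ⟨z, hz, rfl⟩; exact hbar z hz) isClosed_closure
    refine (hK.prod hK).continuousOn_of_closure_graph
      (fun x _ => ⟨isStarProjection_starProjection, isStarProjection_starProjection⟩)
      fun x hx ⟨P, Q⟩ hPQ => ?_
    obtain ⟨U, W, he, -⟩ := hG (hsub hPQ)
    obtain ⟨rfl, rfl⟩ := Prod.mk.inj he
    obtain ⟨rfl, rfl⟩ := huniq (hsub hPQ) (hbar x hx)
    rfl

end Extension

section Dynamics

variable {V : Type*} [NormedAddCommGroup V] [NormedSpace ℝ V] {f g : V → V}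

theorem ContDiff.iterate {n : WithTop ℕ∞} (hf : ContDiff ℝ n f) (k : ℕ) :
    ContDiff ℝ n f^[k] := by
  induction k with
  | zero => exact contDiff_id
  | succ k ih => rw [iterate_succ']; exact hf.comp ih

theorem fderiv_comp_fderiv_of_leftInverse (hf : Differentiable ℝ f) (hg : Differentiable ℝ g)
    (hgf : LeftInverse g f) (x : V) :
    (fderiv ℝ g (f x)).comp (fderiv ℝ f x) = ContinuousLinearMap.id ℝ V := by
  rw [← fderiv_comp x (hg (f x)) (hf x), hgf.comp_eq_id, fderiv_id]

theorem injective_fderiv_of_leftInverse (hf : Differentiable ℝ f) (hg : Differentiable ℝ g)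
    (hgf : LeftInverse g f) (x : V) : Injective (fderiv ℝ f x) :=
  LeftInverse.injective (g := fderiv ℝ g (f x))
    fun v => congr($(fderiv_comp_fderiv_of_leftInverse hf hg hgf x) v)

theorem map_fderiv_iterate {Λ : Set V} {E : V → Submodule ℝ V} (hf : Differentiable ℝ f)
    (hΛ : MapsTo f Λ Λ)
    (hE : ∀ x ∈ Λ, (E x).map (fderiv ℝ f x : V →ₗ[ℝ] V) = E (f x))
    (n : ℕ) {x : V} (hx : x ∈ Λ) :
    (E x).map (fderiv ℝ f^[n] x : V →ₗ[ℝ] V) = E (f^[n] x) := by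
  induction n with
  | zero => simp [fderiv_id]
  | succ n ih =>
    rw [iterate_succ', fderiv_comp x (hf _) (hf.iterate n x), ContinuousLinearMap.toLinearMap_comp,
      Submodule.map_comp, ih, comp_apply, hE _ (hΛ.iterate n hx)]

theorem dominatedWith_fderiv_iterate_of_inverse {Λ : Set V} {E F : V → Submodule ℝ V}
    {C lam : ℝ} (hf : Differentiable ℝ f) (hg : Differentiable ℝ g) (hgf : LeftInverse g f)
    (hfg : RightInverse g f) (hΛ : f '' Λ = Λ)
    (hE : ∀ x ∈ Λ, (E x).map (fderiv ℝ f x : V →ₗ[ℝ] V) = E (f x))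
    (hF : ∀ x ∈ Λ, (F x).map (fderiv ℝ f x : V →ₗ[ℝ] V) = F (f x))
    (hdom : ∀ x ∈ Λ, DominatedWith (fun n => fderiv ℝ f^[n] x) C lam (E x) (F x))
    {x : V} (hx : x ∈ Λ) : DominatedWith (fun n => fderiv ℝ g^[n] x) C lam (F x) (E x) := by
  have hfΛ : MapsTo f Λ Λ := mapsTo_iff_image_subset.mpr hΛ.subset
  have hgΛ : MapsTo g Λ Λ :=
    mapsTo_iff_image_subset.mpr (by simpa [hΛ] using (hgf.image_image Λ).subset)
  intro n v hv u hu
  obtain ⟨y, hy, rfl⟩ : ∃ y ∈ Λ, f^[n] y = x :=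
    ⟨g^[n] x, hgΛ.iterate n hx, hfg.iterate n x⟩
  have hinv : ∀ w, fderiv ℝ g^[n] (f^[n] y) (fderiv ℝ f^[n] y w) = w := fun w =>
    congr($(fderiv_comp_fderiv_of_leftInverse (hf.iterate n) (hg.iterate n) (hgf.iterate n) y) w)
  rw [← map_fderiv_iterate hf hfΛ hE n hy] at hu
  rw [← map_fderiv_iterate hf hfΛ hF n hy] at hv
  obtain ⟨u, hu, rfl⟩ := hu
  obtain ⟨v, hv, rfl⟩ := hv
  simp only [ContinuousLinearMap.coe_coe, hinv]
  linarith [hdom y hy n u hu v hv]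

theorem image_closure_eq_of_image_eq {X : Type*} [TopologicalSpace X] {f g : X → X}
    (hf : Continuous f) (hg : Continuous g) (hgf : LeftInverse g f) (hfg : RightInverse g f)
    {s : Set X} (hs : f '' s = s) : f '' closure s = closure s :=
  ((Homeomorph.mk ⟨f, g, hgf, hfg⟩ hf hg).image_closure s).trans (congrArg closure hs)

end Dynamics

section Invariance

variable {V : Type*} [NormedAddCommGroup V] [InnerProductSpace ℝ V] [FiniteDimensional ℝ V]

theorem Submodule.map_le_iff_starProjection_comp {U W : Submodule ℝ V} {T : V →L[ℝ] V} :
    U.map (T : V →ₗ[ℝ] V) ≤ W ↔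
      W.starProjection ∘L T ∘L U.starProjection = T ∘L U.starProjection := by
  constructor
  · refine fun h => ContinuousLinearMap.ext fun v => W.starProjection_eq_self_iff.mpr ?_
    exact h ⟨_, U.starProjection_apply_mem v, rfl⟩
  · rintro h _ ⟨u, hu, rfl⟩
    have := congr($h u)
    simp only [ContinuousLinearMap.comp_apply, U.starProjection_eq_self_iff.mpr hu] at this
    exact W.starProjection_eq_self_iff.mp this

theorem map_eq_of_mem_closure {X : Type*} [TopologicalSpace X] {s : Set X}
    {U W : X → Submodule ℝ V} {T : X → V →L[ℝ] V} {φ : X → X}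
    (hU : ContinuousOn (fun x => (U x).starProjection) (closure s))
    (hW : ContinuousOn (fun x => (W x).starProjection) (closure s))
    (hT : ContinuousOn T (closure s)) (hφ : ContinuousOn φ (closure s))
    (hφs : MapsTo φ (closure s) (closure s)) (hTinj : ∀ x ∈ closure s, Injective (T x))
    (hrank : ∀ x ∈ closure s, finrank ℝ (U x) = finrank ℝ (W (φ x)))
    (hs : ∀ x ∈ s, (U x).map (T x : V →ₗ[ℝ] V) = W (φ x))
    {x : X} (hx : x ∈ closure s) :
    (U x).map (T x : V →ₗ[ℝ] V) = W (φ x) := by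
  have hle : EqOn (fun x => (W (φ x)).starProjection ∘L T x ∘L (U x).starProjection)
      (fun x => T x ∘L (U x).starProjection) (closure s) :=
    EqOn.of_subset_closure (fun x hx => Submodule.map_le_iff_starProjection_comp.mp (hs x hx).le)
      ((hW.comp hφ hφs).clm_comp (hT.clm_comp hU)) (hT.clm_comp hU) subset_closure subset_rfl
  refine Submodule.eq_of_le_of_finrank_eq (Submodule.map_le_iff_starProjection_comp.mpr (hle hx)) ?_
  rw [← hrank x hx]
  exact (Submodule.equivMapOfInjective _ (hTinj x hx) (U x)).finrank_eq.symm

end Invariance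

theorem domIneq_iff_forall_dominatedWith {d : ℕ} {f : Euc d → Euc d} {Λ : Set (Euc d)}
    {E F : Euc d → Submodule ℝ (Euc d)} {C lam : ℝ} :
    DomIneq f Λ E F C lam ↔
      ∀ x ∈ Λ, DominatedWith (fun n => fderiv ℝ f^[n] x) C lam (E x) (F x) := by
  have key : ∀ {a b c p q : ℝ}, 0 < p → 0 < q →
      (a / p ≤ c * (b / q) ↔ a * q ≤ c * (b * p)) :=
    fun hp hq => by rw [mul_div_assoc', div_le_div_iff₀ hp hq, mul_assoc]
  refine ⟨fun h x hx n u hu v hv => ?_, fun h x hx n u hu hu0 v hv hv0 =>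
    (key (norm_pos_iff.2 hu0) (norm_pos_iff.2 hv0)).2 (h x hx n u hu v hv)⟩
  rcases eq_or_ne u 0 with rfl | hu0
  · simp
  rcases eq_or_ne v 0 with rfl | hv0
  · simp
  exact (key (norm_pos_iff.2 hu0) (norm_pos_iff.2 hv0)).1 (h x hx n u hu hu0 v hv hv0)

theorem DomIneq.isDominatedDecomposition {d : ℕ} {f g : Euc d → Euc d} {Λ : Set (Euc d)}
    {E F : Euc d → Submodule ℝ (Euc d)} {C lam : ℝ} {i : ℕ} (hdom : DomIneq f Λ E F C lam)
    (hf : Differentiable ℝ f) (hg : Differentiable ℝ g) (hgf : LeftInverse g f)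
    (hfg : RightInverse g f) (hΛ : f '' Λ = Λ)
    (hcompl : ∀ x ∈ Λ, IsCompl (E x) (F x)) (hdim : ∀ x ∈ Λ, finrank ℝ (E x) = i)
    (hE : ∀ x ∈ Λ, (E x).map (fderiv ℝ f x : Euc d →ₗ[ℝ] Euc d) = E (f x))
    (hF : ∀ x ∈ Λ, (F x).map (fderiv ℝ f x : Euc d →ₗ[ℝ] Euc d) = F (f x))
    {x : Euc d} (hx : x ∈ Λ) :
    IsDominatedDecomposition (fun n => fderiv ℝ f^[n] x) (fun n => fderiv ℝ g^[n] x)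
      C lam i (d - i) (E x) (F x) where
  finrank_left := hdim x hx
  finrank_right := by
    have := Submodule.finrank_add_eq_of_isCompl (hcompl x hx)
    rw [finrank_euclideanSpace_fin, hdim x hx] at this
    omega
  forward := domIneq_iff_forall_dominatedWith.mp hdom x hx
  backward := dominatedWith_fderiv_iterate_of_inverse hf hg hgf hfg hΛ hE hF
    (domIneq_iff_forall_dominatedWith.mp hdom) hx

theorem dominated_splitting_extends_to_closure_general
    {d : ℕ} (f : Euc d → Euc d) (hf : IsC1Diffeo f)
    (Λ₀ : Set (Euc d)) (hinv : f '' Λ₀ = Λ₀)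
    (E F : Euc d → Submodule ℝ (Euc d)) (i : ℕ)
    (hcompl : ∀ x ∈ Λ₀, IsCompl (E x) (F x))
    (hdim : ∀ x ∈ Λ₀, Module.finrank ℝ (E x) = i)
    (hEinv : ∀ x ∈ Λ₀, (E x).map (fderiv ℝ f x : Euc d →ₗ[ℝ] Euc d) = E (f x))
    (hFinv : ∀ x ∈ Λ₀, (F x).map (fderiv ℝ f x : Euc d →ₗ[ℝ] Euc d) = F (f x))
    (C lam : ℝ) (hlam0 : 0 < lam) (hlam1 : lam < 1)
    (hdom : DomIneq f Λ₀ E F C lam) :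
    f '' (closure Λ₀) = closure Λ₀ ∧
    ∃ Ebar Fbar : Euc d → Submodule ℝ (Euc d),
      (∀ x ∈ Λ₀, Ebar x = E x ∧ Fbar x = F x) ∧
      IsDomSplitting f (closure Λ₀) Ebar Fbar C lam ∧
      (∀ x ∈ closure Λ₀, Module.finrank ℝ (Ebar x) = i) := by
  obtain ⟨-, hf1, g, hg1, hgf, hfg⟩ := hf
  have hfd := hf1.differentiable one_ne_zero
  have hgd := hg1.differentiable one_ne_zero
  have hfΛ : MapsTo f Λ₀ Λ₀ := mapsTo_iff_image_subset.mpr hinv.subset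
  have hclosure := image_closure_eq_of_image_eq hf1.continuous hg1.continuous hgf hfg hinv
  have hfcl : MapsTo f (closure Λ₀) (closure Λ₀) :=
    mapsTo_iff_image_subset.mpr hclosure.subset
  have hAinj : ∀ n x, Injective (fderiv ℝ f^[n] x) := fun n =>
    injective_fderiv_of_leftInverse (hfd.iterate n) (hgd.iterate n) (hgf.iterate n)
  have hij : finrank ℝ (Euc d) ≤ i + (d - i) := by rw [finrank_euclideanSpace_fin]; omega
  obtain ⟨Ebar, Fbar, hagree, hsplit, hcont⟩ :=
    exists_continuousOn_isDominatedDecomposition_closure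
      (fun n => (hf1.iterate n).continuous_fderiv one_ne_zero)
      (fun n => (hg1.iterate n).continuous_fderiv one_ne_zero) hAinj
      (fun n => injective_fderiv_of_leftInverse (hgd.iterate n) (hfd.iterate n) (hfg.iterate n))
      hlam0.le hlam1 hij
      fun x hx => hdom.isDominatedDecomposition hfd hgd hgf hfg hinv hcompl hdim hEinv hFinv hx
  have hmap := fun {G : Euc d → Submodule ℝ (Euc d)}
      (hG : ContinuousOn (fun x => (G x).starProjection) (closure Λ₀)) =>
    map_eq_of_mem_closure hG hG (hf1.continuous_fderiv one_ne_zero).continuousOn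
      hf1.continuous.continuousOn hfcl fun x _ => injective_fderiv_of_leftInverse hfd hgd hgf x
  refine ⟨hclosure, Ebar, Fbar, hagree,
    ⟨fun x hx => (hsplit x hx).isCompl (hAinj · x) hlam0.le hlam1 hij,
    fun x hx => hmap hcont.fst
      (fun x hx => (hsplit x hx).finrank_left.trans (hsplit _ (hfcl hx)).finrank_left.symm)
      (fun x hx => by rw [(hagree x hx).1, (hagree _ (hfΛ hx)).1, hEinv x hx]) hx,
    fun x hx => hmap hcont.snd
      (fun x hx => (hsplit x hx).finrank_right.trans (hsplit _ (hfcl hx)).finrank_right.symm)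
      (fun x hx => by rw [(hagree x hx).2, (hagree _ (hfΛ hx)).2, hFinv x hx]) hx,
    hcont.fst, hcont.snd, domIneq_iff_forall_dominatedWith.mpr fun x hx => (hsplit x hx).forward⟩,
    fun x hx => (hsplit x hx).finrank_left⟩

/-- A (not necessarily continuous) dominated splitting on an invariant set
with compact closure extends to a genuine (continuous) dominated splitting on the closure,
with the same constants and index; moreover the closure is invariant. -/
theorem dominated_splitting_extends_to_closure
    {d : ℕ} (hd : 1 ≤ d) (f : Euc d → Euc d) (hf : IsC1Diffeo f)
    (Λ₀ : Set (Euc d)) (hinv : f '' Λ₀ = Λ₀) (hcpt : IsCompact (closure Λ₀))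
    (E F : Euc d → Submodule ℝ (Euc d)) (i : ℕ)
    (hcompl : ∀ x ∈ Λ₀, IsCompl (E x) (F x))
    (hdim : ∀ x ∈ Λ₀, Module.finrank ℝ (E x) = i)
    (hEinv : ∀ x ∈ Λ₀, (E x).map (fderiv ℝ f x : Euc d →ₗ[ℝ] Euc d) = E (f x))
    (hFinv : ∀ x ∈ Λ₀, (F x).map (fderiv ℝ f x : Euc d →ₗ[ℝ] Euc d) = F (f x))
    (C lam : ℝ) (hC : 0 < C) (hlam0 : 0 < lam) (hlam1 : lam < 1)
    (hdom : DomIneq f Λ₀ E F C lam) :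
    f '' (closure Λ₀) = closure Λ₀ ∧
    ∃ Ebar Fbar : Euc d → Submodule ℝ (Euc d),
      (∀ x ∈ Λ₀, Ebar x = E x ∧ Fbar x = F x) ∧
      IsDomSplitting f (closure Λ₀) Ebar Fbar C lam ∧
      (∀ x ∈ closure Λ₀, Module.finrank ℝ (Ebar x) = i) :=
  dominated_splitting_extends_to_closure_general f hf Λ₀ hinv E F i hcompl hdim hEinv hFinv C lam
    hlam0 hlam1 hdom
end
end

section
/- Let Λ ⊆ ℝ^d be compact with f(Λ) = Λ, and let E, F assign to each x ∈ Λ linear subspaces with ℝ^d = E(x) ⊕ F(x), Df-invariant (Df_x(E(x)) = E(f(x)), Df_x(F(x)) = F(f(x))). Then the following two conditions are equivalent: (a) there exist C > 0 and λ ∈ (0,1) such that for every x ∈ Λ, every n ≥ 0 and all nonzero u ∈ E(x), v ∈ F(x), ‖D(f^n)_x u‖/‖u‖ ≤ C·λ^n·‖D(f^n)_x v‖/‖v‖; (b) there exists a positive integer m such that for every x ∈ Λ and all nonzero u ∈ E(x), v ∈ F(x), ‖D(f^m)_x u‖/‖u‖ ≤ (1/2)·‖D(f^m)_x v‖/‖v‖.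 -/
open Set

noncomputable section

/-!
Iterating the time-`m` domination along orbits gives the factor `2⁻ᵏ` at the times `m k`.
A general time `n = m k + r` with `r < m` costs only a bounded factor: on the compact set `Λ`
the derivative of `f` is bounded, and it is uniformly injective because `Df⁻¹ = D(f⁻¹) ∘ f`
is bounded as well. This yields domination with `λ = 2^(-1/m)`. Conversely, any time `m`
with `C λ^m ≤ 1/2` works.
-/

open Function NNReal Filter

theorem pow_div_le_inv_mul_rpow_inv_pow {a : ℝ} (ha₀ : 0 < a) (ha₁ : a ≤ 1) {m : ℕ}
    (hm : m ≠ 0) (n : ℕ) : a ^ (n / m) ≤ a⁻¹ * (a ^ (m⁻¹ : ℝ)) ^ n := by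
  have hroot : (a ^ (m⁻¹ : ℝ)) ^ m = a := Real.rpow_inv_natCast_pow ha₀.le hm
  rw [le_inv_mul_iff₀ ha₀, ← pow_succ']
  calc a ^ (n / m + 1) = (a ^ (m⁻¹ : ℝ)) ^ (m * (n / m + 1)) := by rw [pow_mul, hroot]
    _ ≤ (a ^ (m⁻¹ : ℝ)) ^ n :=
      pow_le_pow_of_le_one (by positivity) (Real.rpow_le_one ha₀.le ha₁ (by positivity))
        (Nat.lt_mul_div_succ n (Nat.pos_of_ne_zero hm)).le

theorem fderiv_apply_fderiv_of_leftInverse {V : Type*} [NormedAddCommGroup V]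
    [NormedSpace ℝ V] {f g : V → V} {x : V} (hg : DifferentiableAt ℝ g (f x))
    (hf : DifferentiableAt ℝ f x) (hgf : LeftInverse g f) (w : V) :
    fderiv ℝ g (f x) (fderiv ℝ f x w) = w := by
  have h := fderiv_comp x hg hf
  rw [hgf.comp_eq_id, fderiv_id] at h
  exact (DFunLike.congr_fun h w).symm

section Iterates

variable {V : Type*} [NormedAddCommGroup V] [NormedSpace ℝ V] {f : V → V} {Λ : Set V}

theorem fderiv_iterate_succ' (hf : Differentiable ℝ f) (n : ℕ) (x : V) :
    fderiv ℝ f^[n + 1] x = (fderiv ℝ f (f^[n] x)).comp (fderiv ℝ f^[n] x) := by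
  rw [iterate_succ']
  exact fderiv_comp x (hf _) (hf.iterate n x)

theorem fderiv_iterate_add (hf : Differentiable ℝ f) (a b : ℕ) (x : V) :
    fderiv ℝ f^[a + b] x = (fderiv ℝ f^[a] (f^[b] x)).comp (fderiv ℝ f^[b] x) := by
  rw [iterate_add]
  exact fderiv_comp x (hf.iterate a _) (hf.iterate b x)

theorem fderiv_iterate_apply_mem {E : V → Submodule ℝ V} (hf : Differentiable ℝ f)
    (hΛ : MapsTo f Λ Λ) (hE : ∀ x ∈ Λ, ∀ u ∈ E x, fderiv ℝ f x u ∈ E (f x)) (n : ℕ)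
    {x : V} (hx : x ∈ Λ) {u : V} (hu : u ∈ E x) : fderiv ℝ f^[n] x u ∈ E (f^[n] x) := by
  induction n with
  | zero => simpa using hu
  | succ n ih =>
    rw [fderiv_iterate_succ' hf, iterate_succ_apply']
    exact hE _ (hΛ.iterate n hx) _ ih

theorem injective_fderiv_iterate (hf : Differentiable ℝ f) (hΛ : MapsTo f Λ Λ)
    (hinj : ∀ x ∈ Λ, Injective (fderiv ℝ f x)) (n : ℕ) {x : V} (hx : x ∈ Λ) :
    Injective (fderiv ℝ f^[n] x) := by
  induction n with
  | zero => simpa using injective_id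
  | succ n ih =>
    rw [fderiv_iterate_succ' hf, ContinuousLinearMap.coe_comp]
    exact (hinj _ (hΛ.iterate n hx)).comp ih

theorem norm_fderiv_iterate_le {M : ℝ} (hf : Differentiable ℝ f) (hΛ : MapsTo f Λ Λ)
    (hM : ∀ x ∈ Λ, ‖fderiv ℝ f x‖ ≤ M) (n : ℕ) {x : V} (hx : x ∈ Λ) :
    ‖fderiv ℝ f^[n] x‖ ≤ M ^ n := by
  induction n with
  | zero => simpa using ContinuousLinearMap.norm_id_le
  | succ n ih =>
    have hMy := hM _ (hΛ.iterate n hx)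
    rw [fderiv_iterate_succ' hf, pow_succ']
    exact (ContinuousLinearMap.opNorm_comp_le _ _).trans
      (mul_le_mul hMy ih (norm_nonneg _) ((norm_nonneg _).trans hMy))

theorem antilipschitzWith_fderiv_iterate {K : ℝ≥0} (hf : Differentiable ℝ f)
    (hΛ : MapsTo f Λ Λ) (hK : ∀ x ∈ Λ, AntilipschitzWith K (fderiv ℝ f x)) (n : ℕ) {x : V}
    (hx : x ∈ Λ) : AntilipschitzWith (K ^ n) (fderiv ℝ f^[n] x) := by
  induction n with
  | zero => simpa using AntilipschitzWith.id
  | succ n ih =>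
    rw [fderiv_iterate_succ' hf, pow_succ, ContinuousLinearMap.coe_comp]
    exact (hK _ (hΛ.iterate n hx)).comp ih

theorem IsCompact.exists_one_le_forall_norm_fderiv_le (hΛ : IsCompact Λ)
    (hf : ContDiff ℝ 1 f) : ∃ M, 1 ≤ M ∧ ∀ x ∈ Λ, ‖fderiv ℝ f x‖ ≤ M := by
  obtain ⟨C, hC⟩ :=
    hΛ.exists_bound_of_continuousOn (hf.continuous_fderiv one_ne_zero).continuousOn
  exact ⟨max 1 C, le_max_left _ _, fun x hx => (hC x hx).trans (le_max_right _ _)⟩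

theorem IsCompact.exists_one_le_forall_antilipschitzWith_fderiv {g : V → V}
    (hΛ : IsCompact Λ) (hf : Differentiable ℝ f) (hg : ContDiff ℝ 1 g) (hgf : LeftInverse g f) :
    ∃ K : ℝ≥0, 1 ≤ K ∧ ∀ x ∈ Λ, AntilipschitzWith K (fderiv ℝ f x) := by
  obtain ⟨C, hC⟩ := hΛ.exists_bound_of_continuousOn
    ((hg.continuous_fderiv one_ne_zero).comp hf.continuous).continuousOn
  refine ⟨max 1 C.toNNReal, le_max_left _ _, fun x hx =>
    ContinuousLinearMap.antilipschitz_of_bound _ fun w => ?_⟩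
  have hCK : C ≤ max 1 C.toNNReal :=
    (Real.le_coe_toNNReal C).trans (by exact_mod_cast le_max_right _ _)
  calc ‖w‖ = ‖fderiv ℝ g (f x) (fderiv ℝ f x w)‖ := by
        rw [fderiv_apply_fderiv_of_leftInverse (hg.differentiable one_ne_zero _) (hf x) hgf]
    _ ≤ ‖fderiv ℝ g (f x)‖ * ‖fderiv ℝ f x w‖ := ContinuousLinearMap.le_opNorm _ _
    _ ≤ _ := mul_le_mul_of_nonneg_right ((hC x hx).trans hCK) (norm_nonneg _)

end Iterates

section Domination

variable {V : Type*} [NormedAddCommGroup V] [NormedSpace ℝ V] {f : V → V} {Λ : Set V}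
  {E F : V → Submodule ℝ V}

def IsDominatedAt (f : V → V) (Λ : Set V) (E F : V → Submodule ℝ V) (n : ℕ) (c : ℝ) : Prop :=
  ∀ x ∈ Λ, ∀ u ∈ E x, u ≠ 0 → ∀ v ∈ F x, v ≠ 0 →
    ‖fderiv ℝ f^[n] x u‖ / ‖u‖ ≤ c * (‖fderiv ℝ f^[n] x v‖ / ‖v‖)

theorem IsDominatedAt.mono {n : ℕ} {c c' : ℝ} (h : IsDominatedAt f Λ E F n c) (hc : c ≤ c') :
    IsDominatedAt f Λ E F n c' := fun x hx u hu hu₀ v hv hv₀ =>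
  (h x hx u hu hu₀ v hv hv₀).trans (mul_le_mul_of_nonneg_right hc (by positivity))

theorem isDominatedAt_zero : IsDominatedAt f Λ E F 0 1 := fun x _ u _ hu₀ v _ hv₀ => by
  simp [div_self (norm_ne_zero_iff.2 hu₀), div_self (norm_ne_zero_iff.2 hv₀)]

theorem IsDominatedAt.add {a b : ℕ} {c c' : ℝ} (hf : Differentiable ℝ f) (hΛ : MapsTo f Λ Λ)
    (hE : ∀ x ∈ Λ, ∀ u ∈ E x, fderiv ℝ f x u ∈ E (f x))
    (hF : ∀ x ∈ Λ, ∀ v ∈ F x, fderiv ℝ f x v ∈ F (f x))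
    (hinj : ∀ x ∈ Λ, Injective (fderiv ℝ f x))
    (ha : IsDominatedAt f Λ E F a c) (hb : IsDominatedAt f Λ E F b c') :
    IsDominatedAt f Λ E F (a + b) (c * c') := by
  intro x hx u hu hu₀ v hv hv₀
  have hinjb := injective_fderiv_iterate hf hΛ hinj b hx
  have hu₀' : fderiv ℝ f^[b] x u ≠ 0 := (map_ne_zero_iff _ hinjb).2 hu₀
  have hv₀' : fderiv ℝ f^[b] x v ≠ 0 := (map_ne_zero_iff _ hinjb).2 hv₀
  have hlater := ha _ (hΛ.iterate b hx) _ (fderiv_iterate_apply_mem hf hΛ hE b hx hu) hu₀'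
    _ (fderiv_iterate_apply_mem hf hΛ hF b hx hv) hv₀'
  rw [fderiv_iterate_add hf, ContinuousLinearMap.comp_apply, ContinuousLinearMap.comp_apply]
  calc _ = _ * (‖fderiv ℝ f^[b] x u‖ / ‖u‖) :=
        (div_mul_div_cancel₀ (norm_ne_zero_iff.2 hu₀')).symm
    _ ≤ c * (‖fderiv ℝ f^[a] (f^[b] x) (fderiv ℝ f^[b] x v)‖ / ‖fderiv ℝ f^[b] x v‖) *
        (c' * (‖fderiv ℝ f^[b] x v‖ / ‖v‖)) :=
        mul_le_mul hlater (hb x hx u hu hu₀ v hv hv₀) (by positivity)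
          ((by positivity : (0 : ℝ) ≤ _).trans hlater)
    _ = _ := by rw [mul_mul_mul_comm, div_mul_div_cancel₀ (norm_ne_zero_iff.2 hv₀')]

theorem IsDominatedAt.pow {m : ℕ} {c : ℝ} (hf : Differentiable ℝ f) (hΛ : MapsTo f Λ Λ)
    (hE : ∀ x ∈ Λ, ∀ u ∈ E x, fderiv ℝ f x u ∈ E (f x))
    (hF : ∀ x ∈ Λ, ∀ v ∈ F x, fderiv ℝ f x v ∈ F (f x))
    (hinj : ∀ x ∈ Λ, Injective (fderiv ℝ f x)) (h : IsDominatedAt f Λ E F m c) (k : ℕ) :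
    IsDominatedAt f Λ E F (m * k) (c ^ k) := by
  induction k with
  | zero => simpa using isDominatedAt_zero
  | succ k ih =>
    rw [Nat.mul_succ, add_comm, pow_succ']
    exact h.add hf hΛ hE hF hinj ih

theorem isDominatedAt_of_bounds {M : ℝ} {K : ℝ≥0} (hf : Differentiable ℝ f)
    (hΛ : MapsTo f Λ Λ) (hM : ∀ x ∈ Λ, ‖fderiv ℝ f x‖ ≤ M)
    (hK : ∀ x ∈ Λ, AntilipschitzWith K (fderiv ℝ f x)) (n : ℕ) :
    IsDominatedAt f Λ E F n ((M * K) ^ n) := by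
  intro x hx u _ hu₀ v _ hv₀
  have hM₀ : 0 ≤ M := (norm_nonneg _).trans (hM x hx)
  have hupper : ‖fderiv ℝ f^[n] x u‖ / ‖u‖ ≤ M ^ n :=
    div_le_of_le_mul₀ (norm_nonneg _) (by positivity) ((ContinuousLinearMap.le_opNorm _ _).trans
      (mul_le_mul_of_nonneg_right (norm_fderiv_iterate_le hf hΛ hM n hx) (norm_nonneg _)))
  have hlower : 1 ≤ (K : ℝ) ^ n * (‖fderiv ℝ f^[n] x v‖ / ‖v‖) := by
    rw [← mul_div_assoc, one_le_div (norm_pos_iff.2 hv₀)]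
    exact_mod_cast ContinuousLinearMap.bound_of_antilipschitz _
      (antilipschitzWith_fderiv_iterate hf hΛ hK n hx) v
  calc _ ≤ M ^ n := hupper
    _ ≤ M ^ n * ((K : ℝ) ^ n * (‖fderiv ℝ f^[n] x v‖ / ‖v‖)) :=
        le_mul_of_one_le_right (by positivity) hlower
    _ = _ := by ring

theorem IsDominatedAt.geometric {m : ℕ} {c M : ℝ} {K : ℝ≥0} (hm : m ≠ 0) (hc₀ : 0 < c)
    (hc₁ : c ≤ 1) (hM₁ : 1 ≤ M) (hK₁ : 1 ≤ K) (hf : Differentiable ℝ f) (hΛ : MapsTo f Λ Λ)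
    (hE : ∀ x ∈ Λ, ∀ u ∈ E x, fderiv ℝ f x u ∈ E (f x))
    (hF : ∀ x ∈ Λ, ∀ v ∈ F x, fderiv ℝ f x v ∈ F (f x)) (hM : ∀ x ∈ Λ, ‖fderiv ℝ f x‖ ≤ M)
    (hK : ∀ x ∈ Λ, AntilipschitzWith K (fderiv ℝ f x)) (h : IsDominatedAt f Λ E F m c)
    (n : ℕ) : IsDominatedAt f Λ E F n ((M * K) ^ m * c⁻¹ * (c ^ (m⁻¹ : ℝ)) ^ n) := by
  have hinj x hx := (hK x hx).injective
  have hsplit := (isDominatedAt_of_bounds hf hΛ hM hK (n % m)).add hf hΛ hE hF hinj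
    (h.pow hf hΛ hE hF hinj (n / m))
  rw [Nat.mod_add_div] at hsplit
  refine hsplit.mono ?_
  calc (M * K) ^ (n % m) * c ^ (n / m) ≤ (M * K) ^ m * (c⁻¹ * (c ^ (m⁻¹ : ℝ)) ^ n) :=
        mul_le_mul (pow_le_pow_right₀ (one_le_mul_of_one_le_of_one_le hM₁ (mod_cast hK₁))
          (Nat.mod_lt n (Nat.pos_of_ne_zero hm)).le)
          (pow_div_le_inv_mul_rpow_inv_pow hc₀ hc₁ hm n) (by positivity) (by positivity)
    _ = _ := by ring

end Domination

theorem domIneq_iff_forall_isDominatedAt {d : ℕ} {f : Euc d → Euc d} {Λ : Set (Euc d)}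
    {E F : Euc d → Submodule ℝ (Euc d)} {C lam : ℝ} :
    DomIneq f Λ E F C lam ↔ ∀ n, IsDominatedAt f Λ E F n (C * lam ^ n) :=
  ⟨fun h n x hx => h x hx n, fun h x hx n => h n x hx⟩

theorem domination_iff_uniform_time_general
    {d : ℕ} (f : Euc d → Euc d) (hf : IsC1Diffeo f)
    (Λ : Set (Euc d)) (hΛ : IsCompact Λ) (hinv : f '' Λ = Λ)
    (E F : Euc d → Submodule ℝ (Euc d))
    (hEinv : ∀ x ∈ Λ, (E x).map (fderiv ℝ f x : Euc d →ₗ[ℝ] Euc d) = E (f x))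
    (hFinv : ∀ x ∈ Λ, (F x).map (fderiv ℝ f x : Euc d →ₗ[ℝ] Euc d) = F (f x)) :
    (∃ C lam : ℝ, 0 < C ∧ 0 < lam ∧ lam < 1 ∧ DomIneq f Λ E F C lam) ↔
    (∃ m : ℕ, 0 < m ∧ ∀ x ∈ Λ, ∀ u ∈ E x, u ≠ 0 → ∀ v ∈ F x, v ≠ 0 →
      ‖fderiv ℝ (f^[m]) x u‖ / ‖u‖ ≤ (1/2) * (‖fderiv ℝ (f^[m]) x v‖ / ‖v‖)) := by
  obtain ⟨-, hf, g, hg, hgf, -⟩ := hf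
  constructor
  · rintro ⟨C, lam, -, hlam₀, hlam₁, hD⟩
    have hsmall : ∀ᶠ n in atTop, C * lam ^ n ≤ 1 / 2 :=
      ((tendsto_pow_atTop_nhds_zero_of_lt_one hlam₀.le hlam₁).const_mul C).eventually
        (ge_mem_nhds (by norm_num))
    obtain ⟨m, hm₀, hm⟩ := ((eventually_gt_atTop 0).and hsmall).exists
    exact ⟨m, hm₀, (domIneq_iff_forall_isDominatedAt.1 hD m).mono hm⟩
  · rintro ⟨m, hm₀, hdom⟩
    have hf₁ : Differentiable ℝ f := hf.differentiable one_ne_zero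
    have hΛf : MapsTo f Λ Λ := (mapsTo_image f Λ).mono_right hinv.subset
    have hE : ∀ x ∈ Λ, ∀ u ∈ E x, fderiv ℝ f x u ∈ E (f x) := fun x hx u hu =>
      (hEinv x hx).le (Submodule.mem_map_of_mem hu)
    have hF : ∀ x ∈ Λ, ∀ v ∈ F x, fderiv ℝ f x v ∈ F (f x) := fun x hx v hv =>
      (hFinv x hx).le (Submodule.mem_map_of_mem hv)
    obtain ⟨M, hM₁, hM⟩ := hΛ.exists_one_le_forall_norm_fderiv_le hf
    obtain ⟨K, hK₁, hK⟩ := hΛ.exists_one_le_forall_antilipschitzWith_fderiv hf₁ hg hgf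
    exact ⟨(M * K) ^ m * (1 / 2)⁻¹, (1 / 2) ^ (m⁻¹ : ℝ), by positivity, by positivity,
      Real.rpow_lt_one (by norm_num) (by norm_num) (by positivity),
      domIneq_iff_forall_isDominatedAt.2 <| IsDominatedAt.geometric hm₀.ne' (by norm_num)
        (by norm_num) hM₁ hK₁ hf₁ hΛf hE hF hM hK hdom⟩

/-- The domination inequality with constants (C, λ) is equivalent to
one-step domination by 1/2 at some fixed time m. -/
theorem domination_iff_uniform_time
    {d : ℕ} (hd : 1 ≤ d) (f : Euc d → Euc d) (hf : IsC1Diffeo f)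
    (Λ : Set (Euc d)) (hΛ : IsCompact Λ) (hinv : f '' Λ = Λ)
    (E F : Euc d → Submodule ℝ (Euc d))
    (hcompl : ∀ x ∈ Λ, IsCompl (E x) (F x))
    (hEinv : ∀ x ∈ Λ, (E x).map (fderiv ℝ f x : Euc d →ₗ[ℝ] Euc d) = E (f x))
    (hFinv : ∀ x ∈ Λ, (F x).map (fderiv ℝ f x : Euc d →ₗ[ℝ] Euc d) = F (f x)) :
    (∃ C lam : ℝ, 0 < C ∧ 0 < lam ∧ lam < 1 ∧ DomIneq f Λ E F C lam) ↔
    (∃ m : ℕ, 0 < m ∧ ∀ x ∈ Λ, ∀ u ∈ E x, u ≠ 0 → ∀ v ∈ F x, v ≠ 0 →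
      ‖fderiv ℝ (f^[m]) x u‖ / ‖u‖ ≤ (1/2) * (‖fderiv ℝ (f^[m]) x v‖ / ‖v‖)) :=
  domination_iff_uniform_time_general f hf Λ hΛ hinv E F hEinv hFinv
end
end

section
/- Equip ℝ² with the maximum norm ‖(s,t)‖ = max(|s|, |t|), and for a > 0 let C_a^u := {(s,t) ∈ ℝ² : |s| ≤ a·|t|}. Given σ > 1, there exist η > 0, β > 0 and σ₁ > 1 with e^β + η < σ such that the following holds. Let Ω ⊆ ℝ² be open and let h : Ω → ℝ² be a differentiable map of the form h(x,y) = (u(x,y), v(y)) such that at every point of Ω one has |∂u/∂x| ≤ e^β, |∂u/∂y| < η and |v'(y)| ≥ σ. Then, setting ρ = (e^β + η)/σ < 1: (i) Dh_{(x,y)}(C_1^u) ⊆ C_ρ^u for every (x,y) ∈ Ω; (ii) ‖Dh_{(x,y)} w‖ ≥ σ₁·‖w‖ for every (x,y) ∈ Ω and every w ∈ C_1^u. -/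
noncomputable section

/-- The unstable cone {(s,t) : |s| ≤ a·|t|} in ℝ², for the maximum norm
(the product norm on ℝ × ℝ is the maximum norm). -/
def Cu (a : ℝ) : Set (ℝ × ℝ) := {w | |w.1| ≤ a * |w.2|}

/-! With `w = (s, t)` in the cone `|s| ≤ |t|`, the derivative of `(x, y) ↦ (u(x, y), v(y))` sends
`w` to `(s ∂ₓu + t ∂ᵧu, v' t)`. The first coordinate is at most `(e^β + η)|t|` and the second at
least `σ|t|`, so the image lies in the cone of aperture `(e^β + η)/σ` and has norm at least
`σ|t| = σ‖w‖`. Taking `e^β = (σ + 1)/2` and `η = (σ - 1)/4` makes `e^β + η < σ`. -/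

theorem ContinuousLinearMap.apply_eq_fst_smul_add_snd_smul {𝕜 M : Type*} [Semiring 𝕜]
    [TopologicalSpace 𝕜] [AddCommMonoid M] [TopologicalSpace M] [Module 𝕜 M]
    (L : 𝕜 × 𝕜 →L[𝕜] M) (w : 𝕜 × 𝕜) :
    L w = w.1 • L (1, 0) + w.2 • L (0, 1) := by
  conv_lhs => rw [show w = w.1 • ((1 : 𝕜), (0 : 𝕜)) + w.2 • ((0 : 𝕜), (1 : 𝕜)) by ext <;> simp]
  rw [map_add, map_smul, map_smul]

theorem fderiv_skewProduct_apply {u : ℝ × ℝ → ℝ} {v : ℝ → ℝ} {p : ℝ × ℝ}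
    (hu : DifferentiableAt ℝ u p) (hv : DifferentiableAt ℝ v p.2) (w : ℝ × ℝ) :
    fderiv ℝ (fun q : ℝ × ℝ => (u q, v q.2)) p w = (fderiv ℝ u p w, deriv v p.2 * w.2) := by
  have hskew : HasFDerivAt (fun q : ℝ × ℝ => (u q, v q.2)) _ p :=
    hu.hasFDerivAt.prodMk (hv.hasDerivAt.comp_hasFDerivAt p (hasFDerivAt_snd (p := p)))
  rw [hskew.fderiv]
  simp [mul_comm]

theorem skewProduct_mem_Cu {a b c A B σ k : ℝ} {w : ℝ × ℝ} (hw : w ∈ Cu k) (hk : 0 ≤ k)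
    (ha : |a| ≤ A) (hb : |b| ≤ B) (hc : σ ≤ |c|) (hσ : 0 < σ) :
    (w.1 * a + w.2 * b, c * w.2) ∈ Cu ((A * k + B) / σ) := by
  have hw : |w.1| ≤ k * |w.2| := hw
  have hA : 0 ≤ A := (abs_nonneg a).trans ha
  have hB : 0 ≤ B := (abs_nonneg b).trans hb
  show |w.1 * a + w.2 * b| ≤ (A * k + B) / σ * |c * w.2|
  calc |w.1 * a + w.2 * b| ≤ |w.1| * |a| + |w.2| * |b| := by
        simpa only [abs_mul] using abs_add_le (w.1 * a) (w.2 * b)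
    _ ≤ k * |w.2| * A + |w.2| * B :=
        add_le_add (mul_le_mul hw ha (abs_nonneg a) (by positivity))
          (mul_le_mul_of_nonneg_left hb (abs_nonneg _))
    _ = (A * k + B) / σ * (σ * |w.2|) := by field_simp
    _ ≤ (A * k + B) / σ * |c * w.2| := by rw [abs_mul]; gcongr

theorem norm_eq_abs_snd_of_mem_Cu {k : ℝ} {w : ℝ × ℝ} (hw : w ∈ Cu k) (hk : k ≤ 1) :
    ‖w‖ = |w.2| := by
  have hw : |w.1| ≤ k * |w.2| := hw
  rw [Prod.norm_def, Real.norm_eq_abs, Real.norm_eq_abs, max_eq_right]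
  nlinarith [abs_nonneg w.2]

theorem mul_norm_le_norm_skewProduct_of_mem_Cu {c σ k x : ℝ} {w : ℝ × ℝ} (hw : w ∈ Cu k)
    (hk : k ≤ 1) (hc : σ ≤ |c|) : σ * ‖w‖ ≤ ‖(x, c * w.2)‖ :=
  calc σ * ‖w‖ = σ * |w.2| := by rw [norm_eq_abs_snd_of_mem_Cu hw hk]
    _ ≤ |c * w.2| := by rw [abs_mul]; gcongr
    _ ≤ ‖(x, c * w.2)‖ := le_max_right _ _

/-- cone-field estimate for skew-product-like planar maps. -/
theorem cone_field_lemma (σ : ℝ) (hσ : 1 < σ) :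
    ∃ (η β σ₁ : ℝ), 0 < η ∧ 0 < β ∧ 1 < σ₁ ∧ Real.exp β + η < σ ∧
      ∀ (Ω : Set (ℝ × ℝ)), IsOpen Ω →
      ∀ (u : ℝ × ℝ → ℝ) (v : ℝ → ℝ),
        (∀ p ∈ Ω, DifferentiableAt ℝ u p) →
        (∀ p ∈ Ω, DifferentiableAt ℝ v p.2) →
        (∀ p ∈ Ω, |fderiv ℝ u p (1, 0)| ≤ Real.exp β) →
        (∀ p ∈ Ω, |fderiv ℝ u p (0, 1)| < η) →
        (∀ p ∈ Ω, σ ≤ |deriv v p.2|) →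
        (Real.exp β + η) / σ < 1 ∧
        ∀ p ∈ Ω, ∀ w ∈ Cu 1,
          fderiv ℝ (fun q : ℝ × ℝ => (u q, v q.2)) p w ∈ Cu ((Real.exp β + η) / σ) ∧
          σ₁ * ‖w‖ ≤ ‖fderiv ℝ (fun q : ℝ × ℝ => (u q, v q.2)) p w‖ := by
  have hexp : Real.exp (Real.log ((σ + 1) / 2)) = (σ + 1) / 2 := Real.exp_log (by linarith)
  refine ⟨(σ - 1) / 4, Real.log ((σ + 1) / 2), σ, by linarith, Real.log_pos (by linarith), hσ,
    by rw [hexp]; linarith, ?_⟩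
  intro Ω _ u v hu hv hux huy hv'
  have hσ₀ : 0 < σ := by linarith
  refine ⟨(div_lt_one hσ₀).2 (by rw [hexp]; linarith), fun p hp w hw => ?_⟩
  rw [fderiv_skewProduct_apply (hu p hp) (hv p hp),
    (fderiv ℝ u p).apply_eq_fst_smul_add_snd_smul w, smul_eq_mul, smul_eq_mul]
  refine ⟨?_, mul_norm_le_norm_skewProduct_of_mem_Cu hw le_rfl (hv' p hp)⟩
  simpa only [mul_one] using
    skewProduct_mem_Cu hw zero_le_one (hux p hp) (huy p hp).le (hv' p hp) hσ₀
end
end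

section
/- Let η > 0, δ > 0, α > 0, γ > 0, β > 0 and λ ∈ ℝ satisfy e^β < 2 and λ > −β. Let h : ℝ² → ℝ² be a C¹ map of the form h(x,y) = (u(x,y), v(y)) such that 0 < ∂u/∂x(x,y) ≤ e^{−λ} and |∂u/∂y(x,y)| < η for all (x,y) ∈ ℝ². Then there exists a C¹ map g : ℝ² → ℝ² which coincides with h outside the open ball of radius δ centered at the origin, of the form g(x,y) = (ũ(x,y), v(y)), such that: (i) 0 < ∂ũ/∂x(x,y) ≤ e^{γ−λ} and |∂ũ/∂y(x,y)| < η for all (x,y); (ii) sup_{(x,y)} ‖g(x,y) − h(x,y)‖ < α; (iii) sup_{(x,y)} ‖Dg_{(x,y)} − Dh_{(x,y)}‖_{op} < 2(e^γ − 1); (iv) ∂ũ/∂x(0,0) = e^γ·∂u/∂x(0,0) and ∂ũ/∂y(0,0) = ∂u/∂y(0,0), so that Dg_{(0,0)}(1,0) = e^γ·Dh_{(0,0)}(1,0). -/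
noncomputable section

abbrev E2 := EuclideanSpace ℝ (Fin 2)

/-- The point of ℝ² (with the Euclidean norm) with coordinates (a, b). -/
def mk2 (a b : ℝ) : E2 := (WithLp.equiv 2 (Fin 2 → ℝ)).symm ![a, b]

/-- The first standard basis vector. -/
def e0 : E2 := mk2 1 0
/-- The second standard basis vector. -/
def e1 : E2 := mk2 0 1

/-!
Perturb `u` by `w (x, y) = t x * ρ y`, supported in the `δ`-ball, where `ρ` is a bump with
`ρ 0 = 1` and `t` has slope `d = (exp γ - 1) * ∂ₓu 0` at the origin, slope at most `d` everywhere
(giving the bound `exp (γ - lam)`), and slope at least `-κ`, where `κ` is at most half the minimum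
of `∂ₓu` on the ball (keeping `∂ₓ (u + w)` positive). Such a `t` can be taken arbitrarily small in
sup norm: its steep rise near `0` is undone by a gentle descent over a long interval. Then `w` and
`∂_y w` are small too, and `‖Dw‖ ≤ d + small < 2 (exp γ - 1)` because `exp (-lam) < 2`.
-/

open Real Set

def tent (s : ℝ) : ℝ := max 0 (1 - |s|)

lemma continuous_tent : Continuous tent := by
  unfold tent
  fun_prop

lemma tent_mem_Icc (s : ℝ) : tent s ∈ Icc (0 : ℝ) 1 :=
  ⟨le_max_left _ _, max_le zero_le_one (by linarith [abs_nonneg s])⟩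

def tentPrimitive (z : ℝ) : ℝ := ∫ s in (0 : ℝ)..z, tent s

lemma hasDerivAt_tentPrimitive (z : ℝ) : HasDerivAt tentPrimitive (tent z) z :=
  (continuous_tent.integral_hasStrictDerivAt 0 z).hasDerivAt

lemma contDiff_tentPrimitive : ContDiff ℝ 1 tentPrimitive := by
  rw [contDiff_one_iff_deriv]
  refine ⟨fun z => (hasDerivAt_tentPrimitive z).differentiableAt, ?_⟩
  rw [funext fun z => (hasDerivAt_tentPrimitive z).deriv]
  exact continuous_tent

lemma tentPrimitive_eq_of_one_le_abs {a b : ℝ} (hab : a ≤ b) (h : ∀ s ∈ Icc a b, 1 ≤ |s|) :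
    tentPrimitive b = tentPrimitive a := by
  have hzero : ∫ s in a..b, tent s = 0 := by
    refine intervalIntegral.integral_zero_ae (.of_forall fun s hs => max_eq_left ?_)
    rw [uIoc_of_le hab] at hs
    linarith [h s (Ioc_subset_Icc_self hs)]
  rw [tentPrimitive, tentPrimitive, ← intervalIntegral.integral_add_adjacent_intervals
    (continuous_tent.intervalIntegrable 0 a) (continuous_tent.intervalIntegrable a b), hzero,
    add_zero]

lemma tentPrimitive_of_one_le {z : ℝ} (hz : 1 ≤ z) : tentPrimitive z = tentPrimitive 1 :=
  tentPrimitive_eq_of_one_le_abs hz fun s hs => hs.1.trans (le_abs_self s)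

lemma tentPrimitive_of_le_neg_one {z : ℝ} (hz : z ≤ -1) : tentPrimitive z = tentPrimitive (-1) :=
  (tentPrimitive_eq_of_one_le_abs hz fun s hs => by
    rw [abs_of_neg (by linarith [hs.2])]
    linarith [hs.2]).symm

lemma abs_tentPrimitive_le_abs (z : ℝ) : |tentPrimitive z| ≤ |z| := by
  have := intervalIntegral.norm_integral_le_of_norm_le_const (a := 0) (b := z) (C := 1)
    fun s _ => (Real.norm_of_nonneg (tent_mem_Icc s).1).trans_le (tent_mem_Icc s).2
  simpa [tentPrimitive] using this

lemma abs_tentPrimitive_le_one (z : ℝ) : |tentPrimitive z| ≤ 1 := by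
  rcases le_total 1 z with hz | hz
  · rw [tentPrimitive_of_one_le hz]
    simpa using abs_tentPrimitive_le_abs 1
  rcases le_total z (-1) with hz' | hz'
  · rw [tentPrimitive_of_le_neg_one hz']
    simpa using abs_tentPrimitive_le_abs (-1)
  exact (abs_tentPrimitive_le_abs z).trans (abs_le.2 ⟨hz', hz⟩)

lemma exists_tilt {d κ ε r : ℝ} (hd : 0 < d) (hκ : 0 < κ) (hε : 0 < ε) (hr : 0 < r) :
    ∃ t : ℝ → ℝ, ContDiff ℝ 1 t ∧ deriv t 0 = d ∧ (∀ x, -κ ≤ deriv t x ∧ deriv t x ≤ d) ∧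
      (∀ x, |t x| ≤ ε) ∧ ∀ x, r ≤ |x| → t x = 0 := by
  set l := min (min (ε / (2 * d)) (κ * r / (2 * d))) r
  have hl : 0 < l := lt_min (lt_min (by positivity) (by positivity)) hr
  have hlε : d * l ≤ ε / 2 := by
    have : l ≤ ε / (2 * d) := (min_le_left _ _).trans (min_le_left _ _)
    rw [le_div_iff₀ (by positivity)] at this
    linarith
  have hlκ : 2 * d * l ≤ κ * r := by
    have : l ≤ κ * r / (2 * d) := (min_le_left _ _).trans (min_le_right _ _)
    rwa [le_div_iff₀ (by positivity), mul_comm] at this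
  have hlr : l ≤ r := min_le_right _ _
  -- `tentPrimitive (x / l)` rises steeply, and `tentPrimitive (2 * x / r - 1)` gently, by the same
  -- amount, so `t` vanishes off `(-r, r)` while its slope stays above `-2 * d * l / r`
  set t : ℝ → ℝ := fun x => d * l * (tentPrimitive (x / l) - tentPrimitive (2 * x / r - 1))
  have ht' : ∀ x, HasDerivAt t (d * (tent (x / l) - 2 * l / r * tent (2 * x / r - 1))) x := by
    intro x
    have h₁ := (hasDerivAt_tentPrimitive (x / l)).comp x ((hasDerivAt_id x).div_const l)
    have h₂ := (hasDerivAt_tentPrimitive (2 * x / r - 1)).comp x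
      ((((hasDerivAt_id x).const_mul 2).div_const r).sub_const 1)
    refine ((h₁.sub h₂).const_mul (d * l)).congr_deriv ?_
    field_simp
  have hS := contDiff_tentPrimitive
  refine ⟨t, by fun_prop, ?_, fun x => ?_, fun x => ?_, fun x hx => ?_⟩
  · simp [(ht' 0).deriv, tent]
  · have h₁ := tent_mem_Icc (x / l)
    have h₂ := tent_mem_Icc (2 * x / r - 1)
    have ha : 0 ≤ d * (2 * l / r) := by positivity
    have ha' : d * (2 * l / r) ≤ κ := by rw [mul_div_assoc', div_le_iff₀ hr]; linarith
    rw [(ht' x).deriv]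
    constructor <;> nlinarith [mul_nonneg hd.le h₁.1, mul_le_mul_of_nonneg_left h₁.2 hd.le,
      mul_nonneg ha h₂.1, mul_le_mul_of_nonneg_left h₂.2 ha]
  · have h₁ := abs_tentPrimitive_le_one (x / l)
    have h₂ := abs_tentPrimitive_le_one (2 * x / r - 1)
    calc |t x| = d * l * |tentPrimitive (x / l) - tentPrimitive (2 * x / r - 1)| := by
          rw [abs_mul, abs_of_pos (by positivity)]
      _ ≤ d * l * 2 := by gcongr; exact (abs_sub _ _).trans (by linarith)
      _ ≤ ε := by linarith
  · rcases le_abs'.1 hx with hx | hx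
    · have h₁ : x / l ≤ -1 := by rw [div_le_iff₀ hl]; nlinarith
      have h₂ : 2 * x / r - 1 ≤ -1 := by
        have : 2 * x / r ≤ 0 := div_nonpos_of_nonpos_of_nonneg (by linarith) hr.le
        linarith
      simp only [t, tentPrimitive_of_le_neg_one h₁, tentPrimitive_of_le_neg_one h₂, sub_self,
        mul_zero]
    · have h₁ : 1 ≤ x / l := by rw [le_div_iff₀ hl]; linarith
      have h₂ : 1 ≤ 2 * x / r - 1 := by rw [le_sub_iff_add_le, le_div_iff₀ hr]; linarith
      simp only [t, tentPrimitive_of_one_le h₁, tentPrimitive_of_one_le h₂, sub_self, mul_zero]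

lemma eq_smul_e0_add_smul_e1 (x : E2) : x = x 0 • e0 + x 1 • e1 := by
  ext i; fin_cases i <;> simp [e0, e1, mk2]

lemma mk2_eq_smul_add_smul (a b : ℝ) : mk2 a b = a • e0 + b • e1 := by
  ext i; fin_cases i <;> simp [mk2, e0, e1]

lemma norm_e0 : ‖e0‖ = 1 := by
  simp [EuclideanSpace.norm_eq, Fin.sum_univ_two, e0, mk2]

lemma norm_e1 : ‖e1‖ = 1 := by
  simp [EuclideanSpace.norm_eq, Fin.sum_univ_two, e1, mk2]

lemma norm_le_abs_add_abs (x : E2) : ‖x‖ ≤ |x 0| + |x 1| := by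
  conv_lhs => rw [eq_smul_e0_add_smul_e1 x]
  refine (norm_add_le _ _).trans ?_
  simp [norm_smul, norm_e0, norm_e1]

lemma opNorm_le_abs_apply_e0_add_abs_apply_e1 (φ : E2 →L[ℝ] ℝ) : ‖φ‖ ≤ |φ e0| + |φ e1| := by
  refine φ.opNorm_le_bound (by positivity) fun x => ?_
  have h₀ : |x 0| ≤ ‖x‖ := PiLp.norm_apply_le x 0
  have h₁ : |x 1| ≤ ‖x‖ := PiLp.norm_apply_le x 1
  calc ‖φ x‖ = |x 0 * φ e0 + x 1 * φ e1| := by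
        conv_lhs => rw [eq_smul_e0_add_smul_e1 x]
        simp
    _ ≤ |x 0| * |φ e0| + |x 1| * |φ e1| := by rw [← abs_mul, ← abs_mul]; exact abs_add_le _ _
    _ ≤ (|φ e0| + |φ e1|) * ‖x‖ := by nlinarith [abs_nonneg (φ e0), abs_nonneg (φ e1)]

section ProductOfCoordinates

variable {f g : ℝ → ℝ} {p : E2}

lemma hasFDerivAt_mul_coord (hf : DifferentiableAt ℝ f (p 0)) (hg : DifferentiableAt ℝ g (p 1)) :
    HasFDerivAt (fun q : E2 => f (q 0) * g (q 1))
      (f (p 0) • deriv g (p 1) • PiLp.proj (𝕜 := ℝ) 2 (fun _ : Fin 2 => ℝ) 1 +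
        g (p 1) • deriv f (p 0) • PiLp.proj (𝕜 := ℝ) 2 (fun _ : Fin 2 => ℝ) 0) p :=
  (hf.hasDerivAt.comp_hasFDerivAt p (PiLp.hasFDerivAt_apply (𝕜 := ℝ) 2 p 0)).mul
    (hg.hasDerivAt.comp_hasFDerivAt p (PiLp.hasFDerivAt_apply (𝕜 := ℝ) 2 p 1))

lemma fderiv_mul_coord_apply_e0 (hf : DifferentiableAt ℝ f (p 0))
    (hg : DifferentiableAt ℝ g (p 1)) :
    fderiv ℝ (fun q : E2 => f (q 0) * g (q 1)) p e0 = deriv f (p 0) * g (p 1) := by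
  simp [(hasFDerivAt_mul_coord hf hg).fderiv, e0, mk2, mul_comm]

lemma fderiv_mul_coord_apply_e1 (hf : DifferentiableAt ℝ f (p 0))
    (hg : DifferentiableAt ℝ g (p 1)) :
    fderiv ℝ (fun q : E2 => f (q 0) * g (q 1)) p e1 = f (p 0) * deriv g (p 1) := by
  simp [(hasFDerivAt_mul_coord hf hg).fderiv, e1, mk2]

lemma tsupport_mul_coord_subset {r : ℝ} (hf : ∀ x, r ≤ |x| → f x = 0)
    (hg : ∀ y, r ≤ |y| → g y = 0) :
    tsupport (fun q : E2 => f (q 0) * g (q 1)) ⊆ Metric.closedBall 0 (2 * r) := by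
  have hbox : IsClosed ({q : E2 | |q 0| ≤ r} ∩ {q | |q 1| ≤ r}) := by
    refine .inter (isClosed_le ?_ continuous_const) (isClosed_le ?_ continuous_const) <;> fun_prop
  refine (closure_minimal (fun q hq => ?_) hbox).trans fun q ⟨hq₀, hq₁⟩ => ?_
  · exact ⟨not_lt.1 fun h => left_ne_zero_of_mul hq (hf _ h.le),
      show |q 1| ≤ r from not_lt.1 fun h => right_ne_zero_of_mul hq (hg _ h.le)⟩
  · rw [Metric.mem_closedBall, dist_zero_right]
    linarith [norm_le_abs_add_abs q, show |q 0| ≤ r from hq₀, show |q 1| ≤ r from hq₁]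

end ProductOfCoordinates

lemma exists_tilted_bump {δ d κ ε : ℝ} (hδ : 0 < δ) (hd : 0 < d) (hκ : 0 < κ) (hε : 0 < ε) :
    ∃ w : E2 → ℝ, ContDiff ℝ 1 w ∧ tsupport w ⊆ Metric.ball 0 δ ∧
      fderiv ℝ w 0 e0 = d ∧ fderiv ℝ w 0 e1 = 0 ∧
      (∀ p, -κ ≤ fderiv ℝ w p e0 ∧ fderiv ℝ w p e0 ≤ d) ∧ (∀ p, |fderiv ℝ w p e1| ≤ ε) ∧
      ∀ p, |w p| ≤ ε := by
  let ρ : ContDiffBump (0 : ℝ) := ⟨δ / 6, δ / 3, by positivity, by linarith⟩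
  obtain ⟨C, hC⟩ := (ρ.contDiff.continuous_deriv le_rfl).bounded_above_of_compact_support
    ρ.hasCompactSupport.deriv
  have hC0 : 0 ≤ C := (norm_nonneg _).trans (hC 0)
  obtain ⟨t, ht, ht0, ht', htε, htr⟩ :=
    exists_tilt hd hκ (div_pos hε (by linarith : 0 < C + 1)) (by linarith : 0 < δ / 3)
  have hρ₁ : ContDiff ℝ 1 ρ := ρ.contDiff
  have htd : Differentiable ℝ t := ht.differentiable one_ne_zero
  have hρd : Differentiable ℝ ρ := hρ₁.differentiable one_ne_zero
  have hρ : ∀ y, 0 ≤ ρ y ∧ ρ y ≤ 1 := fun y => ⟨ρ.nonneg, ρ.le_one⟩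
  have htε' : ∀ x, |t x| ≤ ε := fun x =>
    (htε x).trans (div_le_self hε.le (by linarith))
  refine ⟨fun q => t (q 0) * ρ (q 1), by fun_prop, ?_, ?_, ?_, fun p => ?_, fun p => ?_,
    fun p => ?_⟩
  · have hρr : ∀ y, δ / 3 ≤ |y| → ρ y = 0 := fun y hy =>
      ρ.zero_of_le_dist (by simpa [Real.dist_eq] using hy)
    exact (tsupport_mul_coord_subset htr hρr).trans
      (Metric.closedBall_subset_ball (by linarith : 2 * (δ / 3) < δ))
  · rw [fderiv_mul_coord_apply_e0 (htd _) (hρd _)]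
    simp [ht0, ρ.one_of_mem_closedBall (Metric.mem_closedBall_self ρ.rIn_pos.le)]
  · simp [fderiv_mul_coord_apply_e1 (htd _) (hρd _), ρ.eventuallyEq_one.deriv_eq]
  · rw [fderiv_mul_coord_apply_e0 (htd _) (hρd _)]
    obtain ⟨h₁, h₂⟩ := ht' (p 0)
    obtain ⟨h₃, h₄⟩ := hρ (p 1)
    constructor <;> nlinarith
  · rw [fderiv_mul_coord_apply_e1 (htd _) (hρd _), abs_mul]
    calc |t (p 0)| * |deriv ρ (p 1)| ≤ ε / (C + 1) * C :=
          mul_le_mul (htε _) (hC _) (abs_nonneg _) (by positivity)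
      _ ≤ ε := by rw [div_mul_eq_mul_div, div_le_iff₀ (by linarith)]; nlinarith
  · rw [abs_mul]
    have hρ' : |ρ (p 1)| ≤ 1 := abs_le.2 ⟨by linarith [hρ (p 1)], (hρ _).2⟩
    exact (mul_le_of_le_one_right (abs_nonneg _) hρ').trans (htε' _)

lemma norm_mk2_sub_mk2 (a a' b : ℝ) : ‖mk2 a b - mk2 a' b‖ = |a - a'| := by
  rw [mk2_eq_smul_add_smul, mk2_eq_smul_add_smul, add_sub_add_right_eq_sub, ← sub_smul, norm_smul,
    norm_e0, mul_one, Real.norm_eq_abs]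

lemma norm_fderiv_mk2_add_sub_le {u w : E2 → ℝ} {v : ℝ → ℝ} {p : E2} (hu : DifferentiableAt ℝ u p)
    (hw : DifferentiableAt ℝ w p) (hv : DifferentiableAt ℝ v (p 1)) :
    ‖fderiv ℝ (fun q => mk2 (u q + w q) (v (q 1))) p - fderiv ℝ (fun q => mk2 (u q) (v (q 1))) p‖
      ≤ |fderiv ℝ w p e0| + |fderiv ℝ w p e1| := by
  have hH : DifferentiableAt ℝ (fun q => mk2 (u q) (v (q 1))) p := by
    simp only [mk2_eq_smul_add_smul]
    exact (hu.smul_const e0).add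
      ((hv.comp p (PiLp.hasFDerivAt_apply (𝕜 := ℝ) 2 p 1).differentiableAt).smul_const e1)
  have hG : (fun q => mk2 (u q + w q) (v (q 1))) = fun q => mk2 (u q) (v (q 1)) + w q • e0 := by
    ext1 q
    simp only [mk2_eq_smul_add_smul, add_smul]
    abel
  rw [hG, fderiv_fun_add hH (hw.smul_const e0), fderiv_smul_const hw, add_sub_cancel_left,
    ContinuousLinearMap.norm_smulRight_apply, norm_e0, mul_one]
  exact opNorm_le_abs_apply_e0_add_abs_apply_e1 _

theorem perturbation_lemma_general
    (η δ α γ β lam : ℝ) (hδ : 0 < δ) (hα : 0 < α) (hγ : 0 < γ)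
    (hβ2 : Real.exp β < 2) (hlam : -β < lam)
    (u : E2 → ℝ) (v : ℝ → ℝ) (hu : ContDiff ℝ 1 u) (hv : ContDiff ℝ 1 v)
    (hux : ∀ p : E2, 0 < fderiv ℝ u p e0 ∧ fderiv ℝ u p e0 ≤ Real.exp (-lam))
    (huy : ∀ p : E2, |fderiv ℝ u p e1| < η) :
    ∃ ut : E2 → ℝ, ContDiff ℝ 1 ut ∧
      -- g coincides with h outside the open ball of radius δ at the origin
      (∀ p : E2, p ∉ Metric.ball (0 : E2) δ → ut p = u p) ∧
      -- (i)
      (∀ p : E2, 0 < fderiv ℝ ut p e0 ∧ fderiv ℝ ut p e0 ≤ Real.exp (γ - lam)) ∧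
      (∀ p : E2, |fderiv ℝ ut p e1| < η) ∧
      -- (ii)
      (∀ p : E2, ‖mk2 (ut p) (v (p 1)) - mk2 (u p) (v (p 1))‖ < α) ∧
      -- (iii)
      (∀ p : E2,
        ‖fderiv ℝ (fun q : E2 => mk2 (ut q) (v (q 1))) p -
          fderiv ℝ (fun q : E2 => mk2 (u q) (v (q 1))) p‖ < 2 * (Real.exp γ - 1)) ∧
      -- (iv)
      fderiv ℝ ut 0 e0 = Real.exp γ * fderiv ℝ u 0 e0 ∧
      fderiv ℝ ut 0 e1 = fderiv ℝ u 0 e1 := by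
  have hexp : exp (-lam) < 2 := (exp_lt_exp.2 (by linarith)).trans hβ2
  have hud : Differentiable ℝ u := hu.differentiable one_ne_zero
  have hDu : Continuous (fderiv ℝ u) := hu.continuous_fderiv one_ne_zero
  obtain ⟨m, hm, hmu⟩ := (isCompact_closedBall (0 : E2) δ).exists_forall_le'
    (f := fun p => fderiv ℝ u p e0) (by fun_prop) fun p _ => (hux p).1
  obtain ⟨s, hs, hsu⟩ := (isCompact_closedBall (0 : E2) δ).exists_forall_le'
    (f := fun p => η - |fderiv ℝ u p e1|) (by fun_prop) fun p _ => sub_pos.2 (huy p)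
  set d := (exp γ - 1) * fderiv ℝ u 0 e0
  have hγ' : 0 < exp γ - 1 := sub_pos.2 (one_lt_exp_iff.2 hγ)
  have hd : 0 < d := mul_pos hγ' (hux 0).1
  have hd' : d ≤ (exp γ - 1) * exp (-lam) := mul_le_mul_of_nonneg_left (hux 0).2 hγ'.le
  obtain ⟨ε, hε, hεmin⟩ := exists_between
    (lt_min hα (lt_min hs (by nlinarith)) : 0 < min α (min s (2 * (exp γ - 1) - d)))
  obtain ⟨hεα, hεs, hεd⟩ := by simpa only [lt_min_iff] using hεmin
  obtain ⟨w, hw, hwδ, hw0x, hw0y, hwx, hwy, hwabs⟩ :=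
    exists_tilted_bump hδ hd (lt_min (half_pos hm) hd) hε
  have hwd : Differentiable ℝ w := hw.differentiable one_ne_zero
  have hD : ∀ p, fderiv ℝ (fun q => u q + w q) p = fderiv ℝ u p + fderiv ℝ w p :=
    fun p => fderiv_fun_add (hud p) (hwd p)
  refine ⟨fun q => u q + w q, hu.add hw, fun p hp => ?_, fun p => ⟨?_, ?_⟩, fun p => ?_,
    fun p => ?_, fun p => ?_, by simp [hD, hw0x]; ring, by simp [hD, hw0y]⟩
  · simp [image_eq_zero_of_notMem_tsupport fun h => hp (hwδ h)]
  · rw [hD, add_apply]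
    by_cases hp : p ∈ tsupport w
    · linarith [hmu p (Metric.ball_subset_closedBall (hwδ hp)), (hwx p).1,
        min_le_left (m / 2) d]
    · simpa [fderiv_of_notMem_tsupport ℝ hp] using (hux p).1
  · rw [hD, add_apply, sub_eq_add_neg, exp_add]
    nlinarith [(hwx p).2, (hux p).2]
  · rw [hD, add_apply]
    by_cases hp : p ∈ tsupport w
    · have := hsu p (Metric.ball_subset_closedBall (hwδ hp))
      linarith [abs_add_le (fderiv ℝ u p e1) (fderiv ℝ w p e1), hwy p]
    · simpa [fderiv_of_notMem_tsupport ℝ hp] using huy p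
  · rw [norm_mk2_sub_mk2, add_sub_cancel_left]
    linarith [hwabs p]
  · refine (norm_fderiv_mk2_add_sub_le (hud p) (hwd p)
      (hv.differentiable one_ne_zero _)).trans_lt ?_
    have hwx' : |fderiv ℝ w p e0| ≤ d :=
      abs_le.2 ⟨by linarith [(hwx p).1, min_le_right (m / 2) d], (hwx p).2⟩
    linarith [hwy p]

/-- local C¹ perturbation lemma weakening the contraction rate along
the first coordinate of a skew-product-like planar map. -/
theorem perturbation_lemma
    (η δ α γ β lam : ℝ) (hη : 0 < η) (hδ : 0 < δ) (hα : 0 < α) (hγ : 0 < γ)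
    (hβ : 0 < β) (hβ2 : Real.exp β < 2) (hlam : -β < lam)
    (u : E2 → ℝ) (v : ℝ → ℝ) (hu : ContDiff ℝ 1 u) (hv : ContDiff ℝ 1 v)
    (hux : ∀ p : E2, 0 < fderiv ℝ u p e0 ∧ fderiv ℝ u p e0 ≤ Real.exp (-lam))
    (huy : ∀ p : E2, |fderiv ℝ u p e1| < η) :
    ∃ ut : E2 → ℝ, ContDiff ℝ 1 ut ∧
      -- g coincides with h outside the open ball of radius δ at the origin
      (∀ p : E2, p ∉ Metric.ball (0 : E2) δ → ut p = u p) ∧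
      -- (i)
      (∀ p : E2, 0 < fderiv ℝ ut p e0 ∧ fderiv ℝ ut p e0 ≤ Real.exp (γ - lam)) ∧
      (∀ p : E2, |fderiv ℝ ut p e1| < η) ∧
      -- (ii)
      (∀ p : E2, ‖mk2 (ut p) (v (p 1)) - mk2 (u p) (v (p 1))‖ < α) ∧
      -- (iii)
      (∀ p : E2,
        ‖fderiv ℝ (fun q : E2 => mk2 (ut q) (v (q 1))) p -
          fderiv ℝ (fun q : E2 => mk2 (u q) (v (q 1))) p‖ < 2 * (Real.exp γ - 1)) ∧
      -- (iv)
      fderiv ℝ ut 0 e0 = Real.exp γ * fderiv ℝ u 0 e0 ∧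
      fderiv ℝ ut 0 e1 = fderiv ℝ u 0 e1 :=
  perturbation_lemma_general η δ α γ β lam hδ hα hγ hβ2 hlam u v hu hv hux huy
end
end
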